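/- arXiv:math/0003244 — 3 statements merged into one kernel-verified Lean document; each statement's English description precedes it below -/
import Mathlib

section
/- Let G be a finite metabelian 2-group with G/G' ≅ Z/2 × Z/2^m, generated by a, b with a^2, b^(2^m) ∈ G'. Let H = ⟨b, G'⟩ be a maximal subgroup with H/G' cyclic, and suppose the index (G' : H') = 2^κ. Then G' contains an element of order at least 2^κ; in fact the commutator c_2 = [a,b] has order at least 2^κ. -/
/-!
Write `c = [a, b]`. The subgroup `⟨c⟩H'` is normal: `a c a⁻¹ = [a², b] c⁻¹` and
`b c b⁻¹ = [b, c] c`, where `[a², b]` and `[b, c]` lie in `H'` because `a², b, c ∈ H`.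
Modulo `⟨c⟩H'` the generators `a, b` commute, so the quotient is abelian and `G' = ⟨c⟩H'`.
Hence `G'/H'` is cyclic, generated by the image of `c`, and `2^κ = (G' : H')` divides the
order of `c`.
-/

open scoped commutatorElement

namespace Subgroup

variable {G : Type*} [Group G]

theorem normal_of_conj_mem_of_closure_eq_top [Finite G] {N : Subgroup G} {S : Set G}
    (hS : closure S = ⊤) (hN : ∀ s ∈ S, ∀ n ∈ N, s * n * s⁻¹ ∈ N) : N.Normal := by
  rw [← normalizer_eq_top_iff, ← top_le_iff, ← hS, closure_le]
  exact fun s hs ↦ mem_normalizer_fintype (hN s hs)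

theorem conj_mem_zpowers_sup_of_conj_mem {K : Subgroup G} [K.Normal] {c x : G}
    (hc : x * c * x⁻¹ ∈ zpowers c ⊔ K) :
    ∀ n ∈ zpowers c ⊔ K, x * n * x⁻¹ ∈ zpowers c ⊔ K := by
  suffices zpowers c ⊔ K ≤ (zpowers c ⊔ K).comap (MulAut.conj x).toMonoidHom from
    fun n hn ↦ this hn
  exact sup_le (zpowers_le.mpr hc) fun k hk ↦ mem_sup_right (Normal.conj_mem ‹_› k hk x)

theorem relIndex_zpowers_sup_dvd_orderOf (K : Subgroup G) [K.Normal] (c : G) :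
    K.relIndex (zpowers c ⊔ K) ∣ orderOf c := by
  rw [relIndex_sup_right, ← Nat.card_zpowers]
  exact relIndex_dvd_card _ _

theorem commutator_le_of_commutatorElement_mem {a b : G} (hgen : closure {a, b} = ⊤)
    {N : Subgroup G} [N.Normal] (hN : ⁅a, b⁆ ∈ N) : _root_.commutator G ≤ N := by
  rw [← Normal.quotient_commutative_iff_commutator_le]
  set f := QuotientGroup.mk' N
  have hab : Commute (f a) (f b) := by
    rw [← commutatorElement_eq_one_iff_commute, ← map_commutatorElement]
    exact (QuotientGroup.eq_one_iff _).mpr hN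
  have hcomm : ∀ x ∈ ({f a, f b} : Set (G ⧸ N)), ∀ y ∈ ({f a, f b} : Set (G ⧸ N)),
      x * y = y * x := by
    rintro x (rfl | rfl) y (rfl | rfl)
    exacts [rfl, hab.eq, hab.eq.symm, rfl]
  have htop : closure {f a, f b} = ⊤ := by
    rw [← Set.image_pair, ← MonoidHom.map_closure, hgen, ← MonoidHom.range_eq_map,
      QuotientGroup.range_mk']
  have hclosure := isMulCommutative_closure hcomm
  refine ⟨⟨fun x y ↦ ?_⟩⟩
  have hx : x ∈ closure {f a, f b} := htop ▸ mem_top x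
  have hy : y ∈ closure {f a, f b} := htop ▸ mem_top y
  exact congrArg Subtype.val (hclosure.is_comm.comm (⟨x, hx⟩ : closure {f a, f b}) ⟨y, hy⟩)

theorem commutator_eq_zpowers_sup_commutator [Finite G] {a b : G} (hgen : closure {a, b} = ⊤)
    {H : Subgroup G} (hGH : _root_.commutator G ≤ H) (ha : a ^ 2 ∈ H) (hb : b ∈ H) :
    _root_.commutator G = zpowers ⁅a, b⁆ ⊔ ⁅H, H⁆ := by
  set c := ⁅a, b⁆
  have hc : c ∈ _root_.commutator G := commutator_mem_commutator (mem_top a) (mem_top b)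
  have := Normal.of_commutator_le _ hGH
  have hnormal : (zpowers c ⊔ ⁅H, H⁆).Normal := by
    refine normal_of_conj_mem_of_closure_eq_top hgen ?_
    rintro x (rfl | rfl) <;> apply conj_mem_zpowers_sup_of_conj_mem
    · rw [show x * c * x⁻¹ = ⁅x ^ 2, b⁆ * c⁻¹ by
        simp only [c, commutatorElement_def, pow_two]; group]
      exact mul_mem (mem_sup_right (commutator_mem_commutator ha hb))
        (mem_sup_left (inv_mem (mem_zpowers c)))
    · rw [show x * c * x⁻¹ = ⁅x, c⁆ * c by group]
      exact mul_mem (mem_sup_right (commutator_mem_commutator hb (hGH hc)))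
        (mem_sup_left (mem_zpowers c))
  exact le_antisymm (commutator_le_of_commutatorElement_mem hgen (mem_sup_left (mem_zpowers c)))
    (sup_le (zpowers_le.mpr hc) (commutator_mono le_top le_top))

end Subgroup

theorem stmt1_general (κ : ℕ) (G : Type*) [Group G] [Finite G]
    (a b : G) (hgen : Subgroup.closure {a, b} = ⊤)
    (ha : a ^ 2 ∈ commutator G)
    (H : Subgroup G) (hH : H = Subgroup.closure {b} ⊔ commutator G)
    (hκ : ((⁅H, H⁆ : Subgroup G).subgroupOf (commutator G)).index = 2 ^ κ) :
    (∃ g ∈ commutator G, 2 ^ κ ≤ orderOf g) ∧ 2 ^ κ ≤ orderOf ⁅a, b⁆ := by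
  have hGH : commutator G ≤ H := hH ▸ le_sup_right
  have hbH : b ∈ H := hH ▸ Subgroup.mem_sup_left (Subgroup.subset_closure rfl)
  have := Subgroup.Normal.of_commutator_le _ hGH
  have hdvd : 2 ^ κ ∣ orderOf ⁅a, b⁆ := by
    change ⁅H, H⁆.relIndex (commutator G) = 2 ^ κ at hκ
    rw [← hκ, Subgroup.commutator_eq_zpowers_sup_commutator hgen hGH (hGH ha) hbH]
    exact Subgroup.relIndex_zpowers_sup_dvd_orderOf _ _
  have hle := Nat.le_of_dvd (orderOf_pos _) hdvd
  exact ⟨⟨_, Subgroup.commutator_mem_commutator (Subgroup.mem_top a) (Subgroup.mem_top b), hle⟩,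
    hle⟩

/-- Lemma 2: metabelian 2-group `G` with `G/G' ≃ (2, 2^m)`, `H = ⟨b⟩G'` with
`(G' : H') = 2^κ`; then `G'` contains an element of order at least `2^κ`,
in fact `c₂ = [a,b]` has order at least `2^κ`. -/
theorem stmt1 (m κ : ℕ) (hm : 2 ≤ m) (G : Type*) [Group G] [Finite G]
    (hG : IsPGroup 2 G)
    (hmeta : ∀ x y : G, x ∈ commutator G → y ∈ commutator G → Commute x y)
    (a b : G) (hgen : Subgroup.closure {a, b} = ⊤)
    (habel : Nonempty ((G ⧸ commutator G) ≃* Multiplicative (ZMod 2 × ZMod (2 ^ m))))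
    (ha : a ^ 2 ∈ commutator G) (hb : b ^ (2 ^ m) ∈ commutator G)
    (H : Subgroup G) (hH : H = Subgroup.closure {b} ⊔ commutator G)
    (hHmax : H.index = 2)
    (hκ : ((⁅H, H⁆ : Subgroup G).subgroupOf (commutator G)).index = 2 ^ κ) :
    (∃ g ∈ commutator G, 2 ^ κ ≤ orderOf g) ∧ 2 ^ κ ≤ orderOf ⁅a, b⁆ :=
  stmt1_general κ G a b hgen ha H hH hκ
end

section
/- Let p be a prime, G = Z/pZ acting on a finite abelian p-group M with generator σ. Suppose the norm ν = 1 + σ + ... + σ^(p-1) annihilates M, and for M_i = {m ∈ M : m^((1-σ)^i) = 1}, each quotient M_{i+1}/M_i has order p for i = 0, ..., n-1 where n is minimal with M_n = M. Writing n = a(p-1) + b with 0 ≤ b ≤ p-2, then M ≅ (Z/p^(a+1)Z)^b × (Z/p^a Z)^(p-1-b). -/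
/-!
Write `M` additively and let `δ = σ - 1`. Modulo `p`, `(X - 1)^(p-1)` is the cyclotomic polynomial
`Φ_p = 1 + X + ⋯ + X^(p-1)`, and the quotient is `-1` modulo `X - 1`. As `Φ_p(σ) = ν` kills `M` and
`δ` is nilpotent, this gives `δ^(p-1) = p u` with `u` invertible, so the `p^k`-torsion of `M` is
`ker δ^(k(p-1))`, of order `p^min(k(p-1), n)` because every layer of the filtration has order `p`.
A finite abelian `p`-group is determined by the orders of its `p^k`-torsion subgroups, and
`(ℤ/p^(a+1))^b × (ℤ/p^a)^(p-1-b)` has the same ones.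
-/

open Finset Polynomial

section TorsionCount

variable {A B : Type*} [AddCommMonoid A] [AddCommMonoid B]

theorem AddEquiv.card_nsmul_eq_zero (e : A ≃+ B) (d : ℕ) :
    Nat.card {x : A // d • x = 0} = Nat.card {y : B // d • y = 0} :=
  Nat.card_congr <| e.toEquiv.subtypeEquiv fun x => by
    rw [AddEquiv.toEquiv_eq_coe, AddEquiv.coe_toEquiv, ← map_nsmul, map_eq_zero_iff e e.injective]

theorem card_nsmul_eq_zero_prod (d : ℕ) :
    Nat.card {x : A × B // d • x = 0} =
      Nat.card {x : A // d • x = 0} * Nat.card {y : B // d • y = 0} := by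
  rw [← Nat.card_prod]
  exact Nat.card_congr <|
    (Equiv.subtypeEquivRight fun x => by simp [Prod.ext_iff]).trans Equiv.subtypeProdEquivProd

theorem card_nsmul_eq_zero_pi {ι : Type*} [Fintype ι] (G : ι → Type*)
    [∀ i, AddCommMonoid (G i)] (d : ℕ) :
    Nat.card {x : ∀ i, G i // d • x = 0} = ∏ i, Nat.card {y : G i // d • y = 0} := by
  rw [← Nat.card_pi]
  exact Nat.card_congr <|
    (Equiv.subtypeEquivRight fun x => by simp [funext_iff]).trans Equiv.subtypePiEquivPi

end TorsionCount

theorem ZMod.card_nsmul_eq_zero (N d : ℕ) [NeZero N] :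
    Nat.card {x : ZMod N // d • x = 0} = N.gcd d := by
  have h := IsAddCyclic.card_nsmulAddMonoidHom_ker (ZMod N) d
  rwa [Nat.card_zmod] at h

theorem ZMod.card_pow_nsmul_eq_zero {p : ℕ} (hp : p ≠ 0) (e k : ℕ) :
    Nat.card {x : ZMod (p ^ e) // p ^ k • x = 0} = p ^ min k e := by
  have : NeZero (p ^ e) := ⟨pow_ne_zero e hp⟩
  rw [ZMod.card_nsmul_eq_zero]
  rcases le_total k e with h | h
  · rw [min_eq_left h, Nat.gcd_eq_right (pow_dvd_pow p h)]
  · rw [min_eq_right h, Nat.gcd_eq_left (pow_dvd_pow p h)]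

theorem card_pow_nsmul_eq_zero_pi_zmod {ι : Type*} [Fintype ι] {p : ℕ} (hp : p ≠ 0)
    (e : ι → ℕ) (k : ℕ) :
    Nat.card {x : ∀ i, ZMod (p ^ e i) // p ^ k • x = 0} = p ^ ∑ i, min k (e i) := by
  rw [card_nsmul_eq_zero_pi, ← prod_pow_eq_pow_sum]
  exact prod_congr rfl fun i _ => ZMod.card_pow_nsmul_eq_zero hp (e i) k

section FinZModPow

variable {p : ℕ} (a b c : ℕ)

theorem card_fin_zmod_pow_prod (hp : p ≠ 0) :
    Nat.card ((Fin b → ZMod (p ^ (a + 1))) × (Fin c → ZMod (p ^ a))) =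
      p ^ (b * (a + 1) + c * a) := by
  have : NeZero (p ^ (a + 1)) := ⟨pow_ne_zero _ hp⟩
  have : NeZero (p ^ a) := ⟨pow_ne_zero _ hp⟩
  rw [Nat.card_prod, Nat.card_fun, Nat.card_fun, Nat.card_zmod, Nat.card_zmod, Nat.card_fin,
    Nat.card_fin]
  ring

theorem card_pow_nsmul_eq_zero_fin_zmod_pow_prod (hp : p ≠ 0) (k : ℕ) :
    Nat.card {x : (Fin b → ZMod (p ^ (a + 1))) × (Fin c → ZMod (p ^ a)) // p ^ k • x = 0} =
      p ^ (b * min k (a + 1) + c * min k a) := by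
  rw [card_nsmul_eq_zero_prod, card_pow_nsmul_eq_zero_pi_zmod hp (fun _ => a + 1),
    card_pow_nsmul_eq_zero_pi_zmod hp (fun _ => a), ← pow_add]
  simp

end FinZModPow

theorem mul_min_succ_add_mul_min {a b c q : ℕ} (hq : b + c = q) (k : ℕ) :
    b * min k (a + 1) + c * min k a = min (k * q) (a * q + b) := by
  subst hq
  rcases le_or_gt k a with hk | hk
  · rw [min_eq_left (by omega), min_eq_left hk, min_eq_left (by nlinarith)]; ring
  · rw [min_eq_right (by omega), min_eq_right hk.le, min_eq_right (by nlinarith)]; ring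

section Reindex

variable {ι κ : Type*} [Fintype ι] [Fintype κ]

theorem sum_min_succ (e : ι → ℕ) (k : ℕ) :
    ∑ i, min (k + 1) (e i) = ∑ i, min k (e i) + #{i | k < e i} := by
  rw [card_filter, ← sum_add_distrib]
  refine sum_congr rfl fun i _ => ?_
  split_ifs <;> omega

theorem card_filter_lt_eq_of_sum_min_eq {e : ι → ℕ} {f : κ → ℕ}
    (h : ∀ k, ∑ i, min k (e i) = ∑ j, min k (f j)) (k : ℕ) :
    #{i | k < e i} = #{j | k < f j} := by
  have := h (k + 1)
  rw [sum_min_succ, sum_min_succ, h k] at this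
  omega

theorem card_filter_lt_eq_add (e : ι → ℕ) (t : ℕ) :
    #{i | t < e i} = #{i | e i = t + 1} + #{i | t + 1 < e i} := by
  classical
  rw [← card_union_of_disjoint (disjoint_filter.mpr fun i _ h => by omega)]
  congr 1
  ext i
  simp only [mem_filter, mem_union, mem_univ, true_and]
  omega

theorem exists_equiv_of_sum_min_eq {e : ι → ℕ} {f : κ → ℕ}
    (he : ∀ i, e i ≠ 0) (hf : ∀ j, f j ≠ 0)
    (h : ∀ k, ∑ i, min k (e i) = ∑ j, min k (f j)) :
    ∃ φ : ι ≃ κ, ∀ i, f (φ i) = e i := by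
  have hfiber : ∀ t, Nat.card {i // e i = t} = Nat.card {j // f j = t} := fun t => by
    rw [Nat.card_eq_fintype_card, Fintype.card_subtype, Nat.card_eq_fintype_card,
      Fintype.card_subtype]
    cases t with
    | zero => simp [he, hf]
    | succ t =>
      have := card_filter_lt_eq_of_sum_min_eq h t
      have := card_filter_lt_eq_of_sum_min_eq h (t + 1)
      have := card_filter_lt_eq_add e t
      have := card_filter_lt_eq_add f t
      omega
  exact ⟨Equiv.ofFiberEquiv fun t => (Finite.card_eq.mp (hfiber t)).some,
    Equiv.ofFiberEquiv_map _⟩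

end Reindex

theorem AddCommGroup.exists_addEquiv_pi_zmod_pow {p : ℕ} (hp : p.Prime) (A : Type*)
    [AddCommGroup A] [Finite A] {N : ℕ} (hA : Nat.card A = p ^ N) :
    ∃ (ι : Type) (_ : Fintype ι) (e : ι → ℕ), (∀ i, e i ≠ 0) ∧
      Nonempty (A ≃+ ∀ i, ZMod (p ^ e i)) := by
  obtain ⟨ι, _, n, hn, ⟨eqv⟩⟩ := AddCommGroup.equiv_directSum_zmod_of_finite' A
  let eqv' : A ≃+ ∀ i, ZMod (n i) := eqv.trans (DirectSum.addEquivProd _)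
  have hdvd (i : ι) : n i ∣ p ^ N := by
    rw [← hA, Nat.card_congr eqv'.toEquiv, Nat.card_pi]
    simpa using dvd_prod_of_mem (fun i => Nat.card (ZMod (n i))) (mem_univ i)
  choose e he using fun i => (Nat.dvd_prime_pow hp).mp (hdvd i)
  refine ⟨ι, inferInstance, e, fun i h0 => ?_, ⟨eqv'.trans (AddEquiv.piCongrRight fun i =>
    (ZMod.ringEquivCongr (he i).2).toAddEquiv)⟩⟩
  have := hn i
  rw [(he i).2, h0, pow_zero] at this
  omega

theorem AddCommGroup.nonempty_addEquiv_of_card_nsmul_eq_zero {p : ℕ} (hp : p.Prime)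
    {A B : Type*} [AddCommGroup A] [AddCommGroup B] [Finite A] [Finite B] {NA NB : ℕ}
    (hA : Nat.card A = p ^ NA) (hB : Nat.card B = p ^ NB)
    (h : ∀ k, Nat.card {x : A // p ^ k • x = 0} = Nat.card {y : B // p ^ k • y = 0}) :
    Nonempty (A ≃+ B) := by
  obtain ⟨ι, _, e, he, ⟨eA⟩⟩ := exists_addEquiv_pi_zmod_pow hp A hA
  obtain ⟨κ, _, f, hf, ⟨eB⟩⟩ := exists_addEquiv_pi_zmod_pow hp B hB
  have hsum (k : ℕ) : ∑ i, min k (e i) = ∑ j, min k (f j) := by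
    apply Nat.pow_right_injective hp.two_le
    simp only [← card_pow_nsmul_eq_zero_pi_zmod hp.ne_zero, ← eA.card_nsmul_eq_zero,
      ← eB.card_nsmul_eq_zero, h]
  obtain ⟨φ, hφ⟩ := exists_equiv_of_sum_min_eq he hf hsum
  let reindex : (∀ i, ZMod (p ^ e i)) ≃+* ∀ j, ZMod (p ^ f j) :=
    (RingEquiv.piCongrRight fun i => ZMod.ringEquivCongr (congrArg (p ^ ·) (hφ i).symm)).trans
      (RingEquiv.piCongrLeft (fun j => ZMod (p ^ f j)) φ)
  exact ⟨eA.trans <| reindex.toAddEquiv.trans eB.symm⟩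

theorem Polynomial.exists_sub_one_pow_eq_cyclotomic_add (p : ℕ) [hp : Fact p.Prime] :
    ∃ g : ℤ[X], (X - 1) ^ (p - 1) = cyclotomic p ℤ + C (p : ℤ) * (-1 + (X - 1) * g) := by
  have hmod : C (p : ℤ) ∣ (X - 1) ^ (p - 1) - cyclotomic p ℤ := by
    rw [C_dvd_iff_dvd_coeff]
    intro i
    have h := cyclotomic_mul_prime_pow_eq (ZMod p) hp.out.not_dvd_one one_pos
    rw [pow_one, mul_one, cyclotomic_one, Nat.sub_self, pow_zero] at h
    rw [← ZMod.intCast_zmod_eq_zero_iff_dvd, ← eq_intCast (Int.castRingHom (ZMod p)), ← coeff_map]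
    simp [h]
  obtain ⟨q, hq⟩ := hmod
  have hq1 : q.eval 1 = -1 := by
    have h := congrArg (eval 1) hq
    rw [eval_sub, eval_one_cyclotomic_prime, eval_mul, eval_C, eval_pow, eval_sub, eval_X, eval_one,
      sub_self, zero_pow (Nat.sub_ne_zero_of_lt hp.out.one_lt), zero_sub] at h
    have hp0 : (p : ℤ) ≠ 0 := by exact_mod_cast hp.out.ne_zero
    exact (mul_left_cancel₀ hp0 (h.symm.trans (mul_neg_one _).symm))
  obtain ⟨g, hg⟩ : X - C 1 ∣ q - C (q.eval 1) := X_sub_C_dvd_sub_C_eval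
  refine ⟨g, ?_⟩
  rw [map_one, hq1, map_neg, map_one, sub_neg_eq_add] at hg
  rw [← hg, add_comm q, neg_add_cancel_left, ← hq, add_sub_cancel]

theorem exists_isUnit_sub_one_pow_eq_mul {R : Type*} [Ring R] (p : ℕ) [Fact p.Prime] {s : R}
    (hν : ∑ i ∈ range p, s ^ i = 0) (hnil : IsNilpotent (s - 1)) :
    ∃ u : R, IsUnit u ∧ (s - 1) ^ (p - 1) = p * u := by
  obtain ⟨g, hg⟩ := exists_sub_one_pow_eq_cyclotomic_add p
  have hcomm : Commute (s - 1) (aeval s g) := by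
    have := (Commute.all (X - 1 : ℤ[X]) g).map (aeval s)
    rwa [map_sub, aeval_X, map_one] at this
  refine ⟨-1 + (s - 1) * aeval s g, ?_, ?_⟩
  · exact (hcomm.isNilpotent_mul_right hnil).isUnit_add_left_of_commute isUnit_one.neg
      (Commute.neg_one_right _)
  · simpa [cyclotomic_prime, hν] using congrArg (aeval s) hg

section Endomorphism

variable {A : Type*} [AddCommGroup A]

theorem AddMonoid.End.injective_of_isUnit {u : AddMonoid.End A} (hu : IsUnit u) :
    Function.Injective u := by
  obtain ⟨v, rfl⟩ := hu
  exact Function.LeftInverse.injective (g := (↑v⁻¹ : AddMonoid.End A))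
    fun x => DFunLike.congr_fun v.inv_mul x

theorem nsmul_eq_zero_iff_pow_apply_eq_zero {p m : ℕ} {δ u : AddMonoid.End A} (hu : IsUnit u)
    (h : δ ^ m = p * u) (k : ℕ) (x : A) : p ^ k • x = 0 ↔ (δ ^ (k * m)) x = 0 := by
  have hpow : δ ^ (k * m) = u ^ k * (p ^ k : ℕ) := by
    rw [mul_comm, pow_mul, h, (Nat.cast_commute p u).mul_pow k, ← Nat.cast_pow,
      (Nat.cast_commute _ _).eq]
  rw [hpow, AddMonoid.End.coe_mul, Function.comp_apply, AddMonoid.End.natCast_apply,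
    map_eq_zero_iff _ (AddMonoid.End.injective_of_isUnit (hu.pow k))]

theorem card_ker_pow_eq [Finite A] {p n : ℕ} {δ : AddMonoid.End A} (hnil : δ ^ n = 0)
    (hstep : ∀ i < n,
      Nat.card {x : A // (δ ^ (i + 1)) x = 0} = p * Nat.card {x : A // (δ ^ i) x = 0})
    (i : ℕ) : Nat.card {x : A // (δ ^ i) x = 0} = p ^ min i n := by
  induction i with
  | zero => simp
  | succ i ih =>
    rcases lt_or_ge i n with hi | hi
    · rw [hstep i hi, ih, min_eq_left hi.le, min_eq_left hi, pow_succ']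
    · have hker (j : ℕ) (hj : n ≤ j) (x : A) : (δ ^ j) x = 0 := by
        rw [← Nat.sub_add_cancel hj, pow_add, hnil, mul_zero, AddMonoid.End.zero_apply]
      rw [min_eq_right (by omega), ← min_eq_right hi, ← ih,
        Nat.card_congr (Equiv.subtypeUnivEquiv (hker _ hi)),
        Nat.card_congr (Equiv.subtypeUnivEquiv (hker _ (by omega)))]

end Endomorphism

namespace AddMonoid.End

variable {M : Type*} [CommGroup M] (σ : M ≃* M)

def ofMulEquiv : AddMonoid.End (Additive M) :=
  σ.toAdditive.toAddMonoidHom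

theorem ofMulEquiv_pow_apply (i : ℕ) (m : M) :
    (ofMulEquiv σ ^ i) (Additive.ofMul m) = Additive.ofMul ((σ ^ i) m) := by
  induction i with
  | zero => rfl
  | succ i ih => rw [pow_succ', AddMonoid.End.coe_mul, Function.comp_apply, ih, pow_succ']; rfl

theorem ofMulEquiv_sub_one_apply (m : M) :
    (ofMulEquiv σ - 1) (Additive.ofMul m) = Additive.ofMul (σ m * m⁻¹) := by
  rw [← div_eq_mul_inv, ofMul_div]
  rfl

theorem ofMulEquiv_sub_one_pow_apply (i : ℕ) (m : M) :
    ((ofMulEquiv σ - 1) ^ i) (Additive.ofMul m) =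
      Additive.ofMul ((fun x => σ x * x⁻¹)^[i] m) := by
  induction i generalizing m with
  | zero => rfl
  | succ i ih =>
    rw [pow_succ, AddMonoid.End.coe_mul, Function.comp_apply, Function.iterate_succ_apply,
      ofMulEquiv_sub_one_apply, ih]

theorem card_ker_ofMulEquiv_sub_one_pow (i : ℕ) :
    Nat.card {x : Additive M // ((ofMulEquiv σ - 1) ^ i) x = 0} =
      Nat.card {m : M // (fun x => σ x * x⁻¹)^[i] m = 1} :=
  Nat.card_congr <| (Additive.ofMul.subtypeEquiv fun m => by
    rw [ofMulEquiv_sub_one_pow_apply, ofMul_eq_zero]).symm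

theorem geom_sum_ofMulEquiv_eq_zero {p : ℕ}
    (hnorm : ∀ m : M, ∏ i ∈ range p, (σ ^ i) m = 1) :
    ∑ i ∈ range p, ofMulEquiv σ ^ i = 0 := by
  ext x
  obtain ⟨m, rfl⟩ := Additive.ofMul.surjective x
  calc (∑ i ∈ range p, ofMulEquiv σ ^ i) (Additive.ofMul m)
      = ∑ i ∈ range p, (ofMulEquiv σ ^ i) (Additive.ofMul m) := AddMonoidHom.finsetSum_apply _ _ _
    _ = 0 := by simp only [ofMulEquiv_pow_apply, ← ofMul_prod, hnorm, ofMul_one]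

end AddMonoid.End

section NormAnnihilated

variable {M : Type*} [CommGroup M] {σ : M ≃* M} {n : ℕ}

theorem ofMulEquiv_sub_one_pow_eq_zero (hfull : ∀ m : M, (fun x => σ x * x⁻¹)^[n] m = 1) :
    (AddMonoid.End.ofMulEquiv σ - 1) ^ n = 0 := by
  ext x
  obtain ⟨m, rfl⟩ := Additive.ofMul.surjective x
  rw [AddMonoid.End.ofMulEquiv_sub_one_pow_apply, hfull, ofMul_one]
  rfl

variable [Finite M] {p : ℕ}

theorem card_ker_sub_one_iterate (hfull : ∀ m : M, (fun x => σ x * x⁻¹)^[n] m = 1)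
    (hstep : ∀ i < n,
      Nat.card {m : M // (fun x => σ x * x⁻¹)^[i + 1] m = 1}
        = p * Nat.card {m : M // (fun x => σ x * x⁻¹)^[i] m = 1}) (i : ℕ) :
    Nat.card {m : M // (fun x => σ x * x⁻¹)^[i] m = 1} = p ^ min i n := by
  simp only [← AddMonoid.End.card_ker_ofMulEquiv_sub_one_pow] at hstep ⊢
  exact card_ker_pow_eq (ofMulEquiv_sub_one_pow_eq_zero hfull) hstep i

theorem card_pow_nsmul_eq_zero_of_norm_eq_one [Fact p.Prime]
    (hnorm : ∀ m : M, ∏ i ∈ range p, (σ ^ i) m = 1)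
    (hfull : ∀ m : M, (fun x => σ x * x⁻¹)^[n] m = 1)
    (hstep : ∀ i < n,
      Nat.card {m : M // (fun x => σ x * x⁻¹)^[i + 1] m = 1}
        = p * Nat.card {m : M // (fun x => σ x * x⁻¹)^[i] m = 1}) (k : ℕ) :
    Nat.card {x : Additive M // p ^ k • x = 0} = p ^ min (k * (p - 1)) n := by
  obtain ⟨u, hu, hδ⟩ := exists_isUnit_sub_one_pow_eq_mul p
    (AddMonoid.End.geom_sum_ofMulEquiv_eq_zero σ hnorm) ⟨n, ofMulEquiv_sub_one_pow_eq_zero hfull⟩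
  rw [Nat.card_congr (Equiv.subtypeEquivRight (nsmul_eq_zero_iff_pow_apply_eq_zero hu hδ k)),
    AddMonoid.End.card_ker_ofMulEquiv_sub_one_pow, card_ker_sub_one_iterate hfull hstep]

end NormAnnihilated

theorem stmt7_general (p : ℕ) (hp : p.Prime) (M : Type*) [CommGroup M] [Finite M]
    (σ : M ≃* M)
    (hnorm : ∀ m : M, ∏ i ∈ Finset.range p, (σ ^ i) m = 1)
    (n a b : ℕ) (hb : b ≤ p - 2) (hn : n = a * (p - 1) + b)
    (hfull : ∀ m : M, (fun x => σ x * x⁻¹)^[n] m = 1)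
    (hstep : ∀ i < n,
      Nat.card {m : M // (fun x => σ x * x⁻¹)^[i + 1] m = 1}
        = p * Nat.card {m : M // (fun x => σ x * x⁻¹)^[i] m = 1}) :
    Nonempty (M ≃*
      Multiplicative ((Fin b → ZMod (p ^ (a + 1))) × (Fin (p - 1 - b) → ZMod (p ^ a)))) := by
  have : Fact p.Prime := ⟨hp⟩
  have hcard : Nat.card (Additive M) = p ^ n := by
    change Nat.card M = p ^ n
    rw [← Nat.card_congr (Equiv.subtypeUnivEquiv hfull), card_ker_sub_one_iterate hfull hstep,
      min_self]
  obtain ⟨e⟩ := AddCommGroup.nonempty_addEquiv_of_card_nsmul_eq_zero hp hcard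
    (card_fin_zmod_pow_prod a b (p - 1 - b) hp.ne_zero) fun k => by
      rw [card_pow_nsmul_eq_zero_of_norm_eq_one hnorm hfull hstep,
        card_pow_nsmul_eq_zero_fin_zmod_pow_prod a b _ hp.ne_zero, hn,
        mul_min_succ_add_mul_min (by omega : b + (p - 1 - b) = p - 1)]
  exact ⟨MulEquiv.toAdditive.symm e⟩

/-- Gras's structure theorem (Lemma 4): `M` a finite abelian `p`-group with an action of
`⟨σ⟩` of order `p` killed by the algebraic norm `ν = 1 + σ + ⋯ + σ^{p-1}`; with
`M_i = ker (1-σ)^i`, `n` minimal with `M_n = M`, `n = a(p-1) + b`, `0 ≤ b ≤ p-2`, and all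
quotients `M_{i+1}/M_i` of order `p`, one has `M ≃ (ℤ/p^{a+1})^b × (ℤ/p^a)^{p-1-b}`. -/
theorem stmt7 (p : ℕ) (hp : p.Prime) (M : Type*) [CommGroup M] [Finite M]
    (hM : IsPGroup p M) (σ : M ≃* M) (hσp : σ ^ p = 1)
    (hnorm : ∀ m : M, ∏ i ∈ Finset.range p, (σ ^ i) m = 1)
    (n a b : ℕ) (hb : b ≤ p - 2) (hn : n = a * (p - 1) + b)
    (hfull : ∀ m : M, (fun x => σ x * x⁻¹)^[n] m = 1)
    (hmin : ∀ i < n, ∃ m : M, (fun x => σ x * x⁻¹)^[i] m ≠ 1)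
    (hstep : ∀ i < n,
      Nat.card {m : M // (fun x => σ x * x⁻¹)^[i + 1] m = 1}
        = p * Nat.card {m : M // (fun x => σ x * x⁻¹)^[i] m = 1}) :
    Nonempty (M ≃*
      Multiplicative ((Fin b → ZMod (p ^ (a + 1))) × (Fin (p - 1 - b) → ZMod (p ^ a)))) :=
  stmt7_general p hp M σ hnorm n a b hb hn hfull hstep
end

section
/- Let M be a finite abelian p-group with an endomorphism δ (playing the role of 1−σ) such that δ is nilpotent on M. Define M_i = ker(δ^i) and let n be minimal with M_n = M. Then the orders #(M_{i+1}/M_i) are non-increasing in i; in particular if #(M_1) = p then #(M_{i+1}/M_i) = p for all 0 ≤ i < n, and #M = p^n. -/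
private lemma card_range_mul_card_ker {G H : Type*} [AddGroup G] [AddGroup H]
    (f : G →+ H) : Nat.card f.range * Nat.card f.ker = Nat.card G := by
  rw [← Nat.card_congr (QuotientAddGroup.quotientKerEquivRange f).toEquiv]
  exact (AddSubgroup.card_eq_card_quotient_mul_card_addSubgroup f.ker).symm

/-- Gras, Prop. 4.1.ii: for a finite abelian `p`-group `M` with a nilpotent endomorphism
`δ` (playing the role of `1 − σ`), `M_i = ker δ^i`, and `n` minimal with `M_n = M`, the
orders `#(M_{i+1}/M_i)` are non-increasing in `i`; in particular if `#M₁ = p` then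
`#(M_{i+1}/M_i) = p` for all `i < n` and `#M = pⁿ`. -/
theorem stmt19 (p : ℕ) (hp : p.Prime) (M : Type*) [AddCommGroup M] [Finite M]
    (hM : IsPGroup p (Multiplicative M)) (δ : M →+ M)
    (K : ℕ → AddSubgroup M) (hK : ∀ (i : ℕ) (m : M), m ∈ K i ↔ (⇑δ)^[i] m = 0)
    (n : ℕ) (hn : K n = ⊤) (hmin : ∀ i < n, K i ≠ ⊤) :
    (∀ i j : ℕ, i ≤ j →
      Nat.card ↥(K (j + 1)) * Nat.card ↥(K i)
        ≤ Nat.card ↥(K (i + 1)) * Nat.card ↥(K j)) ∧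
    (Nat.card ↥(K 1) = p →
      (∀ i < n, Nat.card ↥(K (i + 1)) = p * Nat.card ↥(K i)) ∧
        Nat.card M = p ^ n) := by
  have : Fact p.Prime := ⟨hp⟩
  set c : ℕ → ℕ := fun i => Nat.card ↥(K i) with hc
  have cpos : ∀ i, 0 < c i := fun i => Nat.card_pos
  -- monotonicity of kernels
  have mono : ∀ i, K i ≤ K (i + 1) := by
    intro i m hm
    rw [hK] at hm ⊢
    rw [Function.iterate_succ_apply', hm, map_zero]
  have mono' : ∀ {i j}, i ≤ j → K i ≤ K j := by
    intro i j hij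
    induction j with
    | zero => simpa [Nat.le_zero.mp hij] using le_refl _
    | succ j ih =>
      rcases Nat.lt_or_ge i (j+1) with h | h
      · exact le_trans (ih (Nat.lt_succ_iff.mp h)) (mono j)
      · have : i = j + 1 := le_antisymm hij h
        simp [this]
  -- key log-concavity step
  have step : ∀ i, c (i + 2) * c i ≤ c (i + 1) * c (i + 1) := by
    intro i
    set φ : M →+ M ⧸ K i := (QuotientAddGroup.mk' (K i)).comp δ with hφ
    -- map on K (i+2)
    set h2 : ↥(K (i+2)) →+ M ⧸ K i := φ.comp (K (i+2)).subtype with hh2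
    set h1 : ↥(K (i+1)) →+ M ⧸ K i := (QuotientAddGroup.mk' (K i)).comp (K (i+1)).subtype with hh1
    have hker2 : h2.ker = (K (i+1)).addSubgroupOf (K (i+2)) := by
      ext ⟨x, hx⟩
      simp only [AddMonoidHom.mem_ker, hh2, hφ, AddMonoidHom.comp_apply,
        AddSubgroup.coe_subtype, QuotientAddGroup.mk'_apply,
        QuotientAddGroup.eq_zero_iff, AddSubgroup.mem_addSubgroupOf]
      rw [hK, hK, ← Function.iterate_succ_apply]
    have hker1 : h1.ker = (K i).addSubgroupOf (K (i+1)) := by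
      ext ⟨x, hx⟩
      simp [hh1, QuotientAddGroup.eq_zero_iff, AddSubgroup.mem_addSubgroupOf]
    have cker2 : Nat.card h2.ker = c (i+1) := by
      rw [hker2]
      exact Nat.card_congr (AddSubgroup.addSubgroupOfEquivOfLe (mono' (by omega))).toEquiv
    have cker1 : Nat.card h1.ker = c i := by
      rw [hker1]
      exact Nat.card_congr (AddSubgroup.addSubgroupOfEquivOfLe (mono i)).toEquiv
    have hrange : h2.range ≤ h1.range := by
      rintro _ ⟨⟨x, hx⟩, rfl⟩
      have hδx : δ x ∈ K (i+1) := by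
        rw [hK] at hx ⊢
        rw [← Function.iterate_succ_apply]
        exact hx
      exact ⟨⟨δ x, hδx⟩, rfl⟩
    have hcle : Nat.card h2.range ≤ Nat.card h1.range :=
      AddSubgroup.card_le_of_le hrange
    have e2 : Nat.card h2.range * c (i+1) = c (i+2) := by
      rw [← cker2]; exact card_range_mul_card_ker h2
    have e1 : Nat.card h1.range * c i = c (i+1) := by
      rw [← cker1]; exact card_range_mul_card_ker h1
    calc c (i+2) * c i = (Nat.card h2.range * c (i+1)) * c i := by rw [e2]
      _ ≤ (Nat.card h1.range * c (i+1)) * c i :=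
          Nat.mul_le_mul_right _ (Nat.mul_le_mul_right _ hcle)
      _ = (Nat.card h1.range * c i) * c (i+1) := by ring
      _ = c (i+1) * c (i+1) := by rw [e1]
  -- part 1
  have part1 : ∀ i j : ℕ, i ≤ j → c (j+1) * c i ≤ c (i+1) * c j := by
    intro i j hij
    induction j with
    | zero => simp [Nat.le_zero.mp hij]
    | succ j ih =>
      rcases Nat.lt_or_ge i (j+1) with h | h
      · have hij' : i ≤ j := Nat.lt_succ_iff.mp h
        have hB := step j
        have hIH := ih hij'
        have key : (c j * c (j+1)) * (c (j+2) * c i)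
            ≤ (c j * c (j+1)) * (c (i+1) * c (j+1)) := by
          calc (c j * c (j+1)) * (c (j+2) * c i)
              = (c (j+2) * c j) * (c (j+1) * c i) := by ring
            _ ≤ (c (j+1) * c (j+1)) * (c (i+1) * c j) := Nat.mul_le_mul hB hIH
            _ = (c j * c (j+1)) * (c (i+1) * c (j+1)) := by ring
        exact Nat.le_of_mul_le_mul_left key (Nat.mul_pos (cpos j) (cpos (j+1)))
      · have : i = j + 1 := le_antisymm hij h
        simp [this, Nat.mul_comm]
  refine ⟨part1, ?_⟩
  intro h1p
  -- K 0 = ⊥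
  have hK0 : K 0 = ⊥ := by
    ext m; simp [hK]
  have hc0 : c 0 = 1 := by
    simp [hc, hK0, AddSubgroup.card_bot]
  -- cards are powers of p
  have hMcard : ∃ k, Nat.card M = p ^ k := by
    obtain ⟨k, hk⟩ := IsPGroup.iff_card.mp hM
    exact ⟨k, hk⟩
  obtain ⟨k, hk⟩ := hMcard
  have hpow : ∀ i, ∃ a, c i = p ^ a := by
    intro i
    have hd : c i ∣ Nat.card M := AddSubgroup.card_addSubgroup_dvd_card (K i)
    rw [hk] at hd
    obtain ⟨a, _, ha⟩ := (Nat.dvd_prime_pow hp).mp hd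
    exact ⟨a, ha⟩
  -- strict increase below n
  have strict : ∀ i < n, c i < c (i + 1) := by
    intro i hi
    rcases Nat.lt_or_ge (c i) (c (i+1)) with h | h
    · exact h
    exfalso
    have heq : K i = K (i + 1) := AddSubgroup.eq_of_le_of_card_ge (mono i) h
    -- then all later kernels equal K i
    have stab : ∀ m, K (i + m) ≤ K i := by
      intro m
      induction m with
      | zero => simp
      | succ m ih =>
        intro x hx
        rw [hK] at hx
        have hδx : δ x ∈ K (i + m) := by
          rw [hK, ← Function.iterate_succ_apply]
          exact hx
        have : δ x ∈ K i := ih hδx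
        rw [hK] at this
        have : x ∈ K (i+1) := by
          rw [hK, Function.iterate_succ_apply]
          exact this
        rw [← heq] at this
        exact this
    have : K n ≤ K i := by
      have := stab (n - i)
      rwa [Nat.add_sub_cancel' (le_of_lt hi)] at this
    exact hmin i hi (le_antisymm le_top (hn ▸ this))
  -- the step below n
  have hstep : ∀ i < n, c (i + 1) = p * c i := by
    intro i hi
    have h1c : c 1 = p := h1p
    have hle : c (i+1) ≤ p * c i := by
      simpa [hc0, h1c] using part1 0 i (Nat.zero_le i)
    obtain ⟨a, ha⟩ := hpow i
    obtain ⟨b, hb⟩ := hpow (i+1)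
    have hlt : a < b := by
      have := strict i hi
      rw [ha, hb] at this
      exact (Nat.pow_lt_pow_iff_right hp.one_lt).mp this
    have hble : b ≤ a + 1 := by
      have : p ^ b ≤ p ^ (a + 1) := by
        rw [← hb, pow_succ, ← ha, Nat.mul_comm]
        exact hle
      exact (Nat.pow_le_pow_iff_right hp.one_lt).mp this
    have hba : b = a + 1 := le_antisymm hble hlt
    rw [ha, hb, hba, pow_succ, Nat.mul_comm]
  refine ⟨fun i hi => hstep i hi, ?_⟩
  -- c i = p ^ i for i ≤ n
  have cval : ∀ i ≤ n, c i = p ^ i := by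
    intro i hi
    induction i with
    | zero => simpa using hc0
    | succ i ih =>
      rw [hstep i (Nat.lt_of_lt_of_le (Nat.lt_succ_self i) hi),
        ih (Nat.le_of_succ_le hi), pow_succ, Nat.mul_comm]
  have hcn : Nat.card ↥(K n) = p ^ n := cval n le_rfl
  rw [hn, AddSubgroup.card_top] at hcn
  exact hcn
end
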